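/- arXiv:1809.07892 — 3 statements merged into one kernel-verified Lean document; each statement's English description precedes it below -/
import Mathlib

section
/- Let $\Sigma_\infty \in S^d_{++}$ satisfy the algebraic Riccati equation $A\Sigma_\infty + \Sigma_\infty A^\top + \Sigma_B - \Sigma_\infty H^\top H \Sigma_\infty = 0$ with $\Sigma_B \succ 0$. Then every solution of $\dot y_t = (A - \tfrac{1}{2}\Sigma_\infty H^\top H)^\top y_t$ satisfies $y_t^\top \Sigma_\infty y_t \le e^{-2\beta t} y_0^\top \Sigma_\infty y_0$ where $\beta = \lambda_{\min}(\Sigma_B)/(2\lambda_{\max}(\Sigma_\infty))$. -/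
/-!
Along `ẏ = Mᵀ y` the quadratic form `V = yᵀ Σ∞ y` has derivative `yᵀ (M Σ∞ + Σ∞ Mᵀ) y`, and for
`M = A - ½ Σ∞ Hᵀ H` the Riccati equation turns `M Σ∞ + Σ∞ Mᵀ` into `-Σ_B`. Hence
`V' = -yᵀ Σ_B y ≤ -λmin(Σ_B) |y|² ≤ -(λmin(Σ_B) / λmax(Σ∞)) V`, and Grönwall's inequality gives the
exponential decay.
-/

open Matrix Real

namespace Matrix.IsHermitian

variable {n : Type*} [Fintype n] [DecidableEq n] {S : Matrix n n ℝ} (hS : S.IsHermitian)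

theorem dotProduct_mulVec_eq_sum_eigenvalues (x : n → ℝ) :
    x ⬝ᵥ S *ᵥ x =
      ∑ i, hS.eigenvalues i * (star (hS.eigenvectorUnitary : Matrix n n ℝ) *ᵥ x) i ^ 2 := by
  set U : Matrix n n ℝ := ↑hS.eigenvectorUnitary
  have hxU : star U *ᵥ x = x ᵥ* U := by
    rw [star_eq_conjTranspose, conjTranspose_eq_transpose_of_trivial, mulVec_transpose]
  conv_lhs => rw [hS.spectral_theorem, Unitary.conjStarAlgAut_apply]
  rw [← mulVec_mulVec, ← mulVec_mulVec, dotProduct_mulVec, ← hxU]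
  simp only [mulVec_diagonal, dotProduct, Function.comp_apply, RCLike.ofReal_real_eq_id, id]
  exact Finset.sum_congr rfl fun i _ => by ring

theorem dotProduct_self_eq_sum_eigenvectorUnitary (x : n → ℝ) :
    x ⬝ᵥ x = ∑ i, (star (hS.eigenvectorUnitary : Matrix n n ℝ) *ᵥ x) i ^ 2 := by
  set U : Matrix n n ℝ := ↑hS.eigenvectorUnitary
  have hUU : U * star U = 1 := mem_unitaryGroup_iff.mp hS.eigenvectorUnitary.2
  have hstar : star U = Uᵀ := by rw [star_eq_conjTranspose, conjTranspose_eq_transpose_of_trivial]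
  have hiso : (star U *ᵥ x) ⬝ᵥ (star U *ᵥ x) = x ⬝ᵥ x := by
    rw [dotProduct_mulVec, hstar, vecMul_transpose, mulVec_mulVec, ← hstar, hUU, one_mulVec]
  rw [← hiso]
  simp only [dotProduct, sq]

theorem iInf_eigenvalues_mul_dotProduct_le (x : n → ℝ) :
    (⨅ i, hS.eigenvalues i) * (x ⬝ᵥ x) ≤ x ⬝ᵥ S *ᵥ x := by
  rw [hS.dotProduct_mulVec_eq_sum_eigenvalues, hS.dotProduct_self_eq_sum_eigenvectorUnitary,
    Finset.mul_sum]
  exact Finset.sum_le_sum fun i _ => mul_le_mul_of_nonneg_right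
    (ciInf_le (Set.finite_range _).bddBelow i) (sq_nonneg _)

theorem dotProduct_mulVec_le_iSup_eigenvalues_mul (x : n → ℝ) :
    x ⬝ᵥ S *ᵥ x ≤ (⨆ i, hS.eigenvalues i) * (x ⬝ᵥ x) := by
  rw [hS.dotProduct_mulVec_eq_sum_eigenvalues, hS.dotProduct_self_eq_sum_eigenvectorUnitary,
    Finset.mul_sum]
  exact Finset.sum_le_sum fun i _ => mul_le_mul_of_nonneg_right
    (le_ciSup (Set.finite_range _).bddAbove i) (sq_nonneg _)

end Matrix.IsHermitian

theorem Matrix.PosSemidef.iInf_div_iSup_eigenvalues_mul_dotProduct_le {n : Type*} [Fintype n]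
    [DecidableEq n] {P Q : Matrix n n ℝ} (hP : P.PosSemidef) (hQ : Q.PosSemidef) (x : n → ℝ) :
    (⨅ i, hQ.1.eigenvalues i) / (⨆ i, hP.1.eigenvalues i) * (x ⬝ᵥ P *ᵥ x) ≤ x ⬝ᵥ Q *ᵥ x := by
  set a := ⨅ i, hQ.1.eigenvalues i
  set b := ⨆ i, hP.1.eigenvalues i
  have ha : 0 ≤ a := Real.iInf_nonneg hQ.eigenvalues_nonneg
  have hb : 0 ≤ b := Real.iSup_nonneg hP.eigenvalues_nonneg
  have hab : a / b * b ≤ a := by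
    rcases hb.eq_or_lt with h | h
    · simp [← h, ha]
    · rw [div_mul_cancel₀ _ h.ne']
  calc a / b * (x ⬝ᵥ P *ᵥ x) ≤ a / b * (b * (x ⬝ᵥ x)) :=
        mul_le_mul_of_nonneg_left (hP.1.dotProduct_mulVec_le_iSup_eigenvalues_mul x)
          (div_nonneg ha hb)
    _ ≤ a * (x ⬝ᵥ x) := by
        rw [← mul_assoc]
        exact mul_le_mul_of_nonneg_right hab (dotProduct_self_star_nonneg x)
    _ ≤ x ⬝ᵥ Q *ᵥ x := hQ.1.iInf_eigenvalues_mul_dotProduct_le x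

section
variable {m n : Type*} [Fintype n] {f g : ℝ → n → ℝ} {f' g' : n → ℝ} {t : ℝ}

theorem HasDerivAt.dotProduct (hf : HasDerivAt f f' t) (hg : HasDerivAt g g' t) :
    HasDerivAt (fun s => f s ⬝ᵥ g s) (f' ⬝ᵥ g t + f t ⬝ᵥ g') t := by
  rw [_root_.dotProduct, _root_.dotProduct, ← Finset.sum_add_distrib]
  exact HasDerivAt.fun_sum fun i _ => (hasDerivAt_pi.1 hf i).fun_mul (hasDerivAt_pi.1 hg i)

theorem HasDerivAt.const_mulVec (S : Matrix m n ℝ) (hf : HasDerivAt f f' t) :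
    HasDerivAt (fun s => S *ᵥ f s) (S *ᵥ f') t :=
  hasDerivAt_pi.2 fun i => by
    simpa [mulVec] using (hasDerivAt_const t (S i)).dotProduct hf

end

theorem hasDerivAt_dotProduct_mulVec_of_hasDerivAt {n : Type*} [Fintype n] (S M : Matrix n n ℝ)
    {y : ℝ → n → ℝ} {t : ℝ} (hy : HasDerivAt y (Mᵀ *ᵥ y t) t) :
    HasDerivAt (fun s => y s ⬝ᵥ S *ᵥ y s) (y t ⬝ᵥ (M * S + S * Mᵀ) *ᵥ y t) t :=
  (hy.dotProduct (hy.const_mulVec S)).congr_deriv <| by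
    rw [add_mulVec, dotProduct_add, ← mulVec_mulVec, ← mulVec_mulVec, dotProduct_mulVec (y t) M,
      mulVec_transpose]

theorem le_exp_mul_of_hasDerivAt_le_mul {V V' : ℝ → ℝ} {c : ℝ}
    (hV : ∀ t, HasDerivAt V (V' t) t) (hle : ∀ t, V' t ≤ c * V t) {t : ℝ} (ht : 0 ≤ t) :
    V t ≤ exp (c * t) * V 0 := by
  have hg : ∀ s, HasDerivAt (fun s => exp (-c * s) * V s) (exp (-c * s) * (V' s - c * V s)) s :=
    fun s => (((hasDerivAt_id s).const_mul (-c)).exp.fun_mul (hV s)).congr_deriv <| by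
      simp only [id]; ring
  have hanti : Antitone fun s => exp (-c * s) * V s :=
    antitone_of_hasDerivAt_nonpos hg fun s =>
      mul_nonpos_of_nonneg_of_nonpos (exp_nonneg _) (by linarith [hle s])
  have hdecay := hanti ht
  simp only [mul_zero, exp_zero, one_mul] at hdecay
  rwa [neg_mul, Real.exp_neg, inv_mul_eq_div, div_le_iff₀ (exp_pos _), mul_comm] at hdecay

theorem lyapunov_eq_of_riccati {K n m : Type*} [Field K] [CharZero K] [Fintype n] [Fintype m]
    {A Q P : Matrix n n K} {H : Matrix m n K} (hP : P.IsSymm)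
    (hARE : A * P + P * Aᵀ + Q - P * Hᵀ * H * P = 0) :
    (A - (1/2 : K) • (P * Hᵀ * H)) * P + P * (A - (1/2 : K) • (P * Hᵀ * H))ᵀ = -Q := by
  have hT : (P * Hᵀ * H)ᵀ = Hᵀ * H * P := by
    simp only [transpose_mul, transpose_transpose, hP.eq, Matrix.mul_assoc]
  rw [transpose_sub, transpose_smul, hT]
  simp only [Matrix.sub_mul, Matrix.mul_sub, Matrix.smul_mul, Matrix.mul_smul, Matrix.mul_assoc]
    at hARE ⊢
  linear_combination (norm := module) hARE

theorem stmt0_general {d m : ℕ}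
    (A : Matrix (Fin d) (Fin d) ℝ) (H : Matrix (Fin m) (Fin d) ℝ)
    (SB Sinf : Matrix (Fin d) (Fin d) ℝ)
    (hSB : SB.PosDef) (hSinf : Sinf.PosDef)
    (hARE : A * Sinf + Sinf * Aᵀ + SB - Sinf * Hᵀ * H * Sinf = 0)
    (y : ℝ → Fin d → ℝ)
    (hy : ∀ t : ℝ, HasDerivAt y ((A - (1/2 : ℝ) • (Sinf * Hᵀ * H))ᵀ.mulVec (y t)) t) :
    ∀ t : ℝ, 0 ≤ t →
      y t ⬝ᵥ Sinf.mulVec (y t) ≤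
        Real.exp (-2 * ((⨅ i, hSB.1.eigenvalues i) / (2 * ⨆ i, hSinf.1.eigenvalues i)) * t) *
          (y 0 ⬝ᵥ Sinf.mulVec (y 0)) := by
  have hV : ∀ t, HasDerivAt (fun s => y s ⬝ᵥ Sinf *ᵥ y s) (-(y t ⬝ᵥ SB *ᵥ y t)) t := fun t => by
    have hderiv := hasDerivAt_dotProduct_mulVec_of_hasDerivAt Sinf _ (hy t)
    rwa [lyapunov_eq_of_riccati (isHermitian_iff_isSymm.1 hSinf.1) hARE, neg_mulVec,
      dotProduct_neg] at hderiv
  refine fun t ht => le_exp_mul_of_hasDerivAt_le_mul hV (fun s => ?_) ht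
  rw [show ∀ a b : ℝ, -2 * (a / (2 * b)) = -(a / b) by intros; ring, neg_mul, neg_le_neg_iff]
  exact hSinf.posSemidef.iInf_div_iSup_eigenvalues_mul_dotProduct_le hSB.posSemidef (y s)

/-- Lyapunov decay for the square-root Riccati limiting system.
If `Σ∞ ≻ 0` solves the ARE `A Σ∞ + Σ∞ Aᵀ + Σ_B - Σ∞ Hᵀ H Σ∞ = 0` with `Σ_B ≻ 0`, then any
solution of `ẏ = (A - ½ Σ∞ Hᵀ H)ᵀ y` satisfies
`yₜᵀ Σ∞ yₜ ≤ e^{-2βt} y₀ᵀ Σ∞ y₀` with `β = λmin(Σ_B)/(2 λmax(Σ∞))`. -/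
theorem stmt0 {d m : ℕ} [NeZero d]
    (A : Matrix (Fin d) (Fin d) ℝ) (H : Matrix (Fin m) (Fin d) ℝ)
    (SB Sinf : Matrix (Fin d) (Fin d) ℝ)
    (hSB : SB.PosDef) (hSinf : Sinf.PosDef)
    (hARE : A * Sinf + Sinf * Aᵀ + SB - Sinf * Hᵀ * H * Sinf = 0)
    (y : ℝ → Fin d → ℝ)
    (hy : ∀ t : ℝ, HasDerivAt y ((A - (1/2 : ℝ) • (Sinf * Hᵀ * H))ᵀ.mulVec (y t)) t) :
    ∀ t : ℝ, 0 ≤ t →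
      y t ⬝ᵥ Sinf.mulVec (y t) ≤
        Real.exp (-2 * ((⨅ i, hSB.1.eigenvalues i) / (2 * ⨆ i, hSinf.1.eigenvalues i)) * t) *
          (y 0 ⬝ᵥ Sinf.mulVec (y 0)) :=
  stmt0_general A H SB Sinf hSB hSinf hARE y hy
end

section
/- Under the assumptions of the previous statement, the matrix exponential satisfies $\|e^{t(A - \frac{1}{2}\Sigma_\infty H^\top H)}\|_2 \le \sqrt{\mathrm{cond}(\Sigma_\infty)}\, e^{-\beta t}$ for all $t \ge 0$, where $\beta = \lambda_{\min}(\Sigma_B)/(2\lambda_{\max}(\Sigma_\infty))$ and $\mathrm{cond}(\Sigma_\infty) = \|\Sigma_\infty\|_2 \|\Sigma_\infty^{-1}\|_2$. -/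
/-!
Write `F = A - ½ Σ∞ HᵀH`. The Riccati equation says exactly that `Σ∞` solves the Lyapunov
equation `F Σ∞ + Σ∞ Fᵀ = -Σ_B`. Conjugating by `R = Σ∞^{1/2}`, the matrix `G = R⁻¹ F R`
satisfies `G + Gᵀ = -R⁻¹ Σ_B R⁻¹ ≤ -2β`, so `‖e^{tG}x‖² e^{2βt}` is non-increasing and
`‖e^{tG}‖ ≤ e^{-βt}`. Finally `e^{tF} = R e^{tG} R⁻¹` and `‖R‖ ‖R⁻¹‖ = √cond(Σ∞)`.
-/

open Matrix Real

/-- The spectral (ℓ²-operator) norm of a real square matrix. -/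
noncomputable def specNorm {d : ℕ} (M : Matrix (Fin d) (Fin d) ℝ) : ℝ :=
  ‖(Matrix.toEuclideanCLM (𝕜 := ℝ) M : EuclideanSpace ℝ (Fin d) →L[ℝ] EuclideanSpace ℝ (Fin d))‖

open scoped RealInnerProductSpace

section Dissipative

variable {E : Type*} [NormedAddCommGroup E] [InnerProductSpace ℝ E] [CompleteSpace E]

theorem hasDerivAt_norm_sq_exp_smul_apply (T : E →L[ℝ] E) (x : E) (s : ℝ) :
    HasDerivAt (fun u : ℝ => ‖NormedSpace.exp (u • T) x‖ ^ 2)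
      (2 * ⟪T (NormedSpace.exp (s • T) x), NormedSpace.exp (s • T) x⟫) s := by
  have h := (hasDerivAt_exp_smul_const' (𝕂 := ℝ) T s).clm_apply (hasDerivAt_const s x)
  simp only [mul_apply_eq_comp, map_zero, add_zero] at h
  simpa only [real_inner_comm] using h.norm_sq

theorem norm_exp_smul_le_of_inner_self_le (T : E →L[ℝ] E) {β : ℝ}
    (hT : ∀ x, ⟪T x, x⟫ ≤ -β * ‖x‖ ^ 2) {t : ℝ} (ht : 0 ≤ t) :
    ‖NormedSpace.exp (t • T)‖ ≤ Real.exp (-β * t) := by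
  refine ContinuousLinearMap.opNorm_le_bound _ (Real.exp_pos _).le fun x => ?_
  set y : ℝ → E := fun u => NormedSpace.exp (u • T) x with hy
  have hderiv (u : ℝ) : HasDerivAt (fun u => Real.exp (2 * β * u) * ‖y u‖ ^ 2)
      (2 * β * Real.exp (2 * β * u) * ‖y u‖ ^ 2 + Real.exp (2 * β * u) * (2 * ⟪T (y u), y u⟫))
      u := by
    refine (((hasDerivAt_id' u).const_mul (2 * β)).exp.mul
      (hasDerivAt_norm_sq_exp_smul_apply T x u)).congr_deriv ?_
    ring
  have hanti : Antitone fun u => Real.exp (2 * β * u) * ‖y u‖ ^ 2 := by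
    refine antitone_of_hasDerivAt_nonpos hderiv fun u => ?_
    show _ ≤ 0
    nlinarith [hT (y u), Real.exp_pos (2 * β * u)]
  have hdecay : Real.exp (2 * β * t) * ‖y t‖ ^ 2 ≤ ‖x‖ ^ 2 := by
    simpa [hy] using hanti ht
  have hexp : Real.exp (2 * β * t) * (Real.exp (-β * t) * ‖x‖) ^ 2 = ‖x‖ ^ 2 := by
    rw [mul_pow, ← mul_assoc, ← Real.exp_nat_mul, ← Real.exp_add]; ring_nf; simp
  exact (pow_le_pow_iff_left₀ (norm_nonneg _) (by positivity) two_ne_zero).1 <|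
    le_of_mul_le_mul_left (hdecay.trans hexp.ge) (Real.exp_pos _)

open ContinuousLinearMap

variable {F S B : E →L[ℝ] E} (R : (E →L[ℝ] E)ˣ) {b s : ℝ}

theorem inner_units_conj_le_of_lyapunov
    (hR : IsSelfAdjoint (R : E →L[ℝ] E)) (hRS : (R : E →L[ℝ] E) * R = S)
    (hLyap : F * S + S * adjoint F = -B) (hb : 0 ≤ b) (hs : 0 < s)
    (hB : ∀ z, b * ‖z‖ ^ 2 ≤ ⟪B z, z⟫) (hS : ∀ z, ⟪S z, z⟫ ≤ s * ‖z‖ ^ 2) (x : E) :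
    ⟪(↑R⁻¹ * F * ↑R) x, x⟫ ≤ -(b / (2 * s)) * ‖x‖ ^ 2 := by
  have hRsymm : ∀ u v, ⟪(R : E →L[ℝ] E) u, v⟫ = ⟪u, (R : E →L[ℝ] E) v⟫ := hR.isSymmetric
  have hSsymm : ∀ u v, ⟪S u, v⟫ = ⟪u, S v⟫ := by
    rw [← hRS, ← sq]; exact (hR.pow 2).isSymmetric
  set z := (↑R⁻¹ : E →L[ℝ] E) x
  have hxz : x = (R : E →L[ℝ] E) z := by
    rw [← mul_apply_eq_comp, Units.mul_inv, one_apply_eq_self]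
  have hRx : (R : E →L[ℝ] E) x = S z := by rw [hxz, ← hRS, mul_apply_eq_comp]
  have hconj : ⟪(↑R⁻¹ * F * ↑R) x, x⟫ = ⟪F (S z), z⟫ := by
    conv_lhs => rw [hxz]
    rw [← hRsymm, ← hxz, mul_apply_eq_comp, mul_apply_eq_comp,
      ← mul_apply_eq_comp (R : E →L[ℝ] E), Units.mul_inv, one_apply_eq_self, hRx]
  have hsymm : 2 * ⟪F (S z), z⟫ = -⟪B z, z⟫ := by
    rw [← inner_neg_left, ← _root_.neg_apply, ← hLyap, _root_.add_apply, inner_add_left,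
      mul_apply_eq_comp, mul_apply_eq_comp, hSsymm, adjoint_inner_left, real_inner_comm z]
    ring
  have hnorm : ‖x‖ ^ 2 ≤ s * ‖z‖ ^ 2 := by
    rw [← real_inner_self_eq_norm_sq]
    conv_lhs => rw [hxz, ← hRsymm, ← mul_apply_eq_comp, hRS]
    exact hS z
  have hscale : b / (2 * s) * ‖x‖ ^ 2 ≤ b / 2 * ‖z‖ ^ 2 :=
    calc b / (2 * s) * ‖x‖ ^ 2 ≤ b / (2 * s) * (s * ‖z‖ ^ 2) := by gcongr
      _ = b / 2 * ‖z‖ ^ 2 := by field_simp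
  linarith [hB z]

theorem norm_exp_smul_le_of_lyapunov
    (hR : IsSelfAdjoint (R : E →L[ℝ] E)) (hRS : (R : E →L[ℝ] E) * R = S)
    (hLyap : F * S + S * adjoint F = -B) (hb : 0 ≤ b) (hs : 0 < s)
    (hB : ∀ z, b * ‖z‖ ^ 2 ≤ ⟪B z, z⟫) (hS : ∀ z, ⟪S z, z⟫ ≤ s * ‖z‖ ^ 2) {t : ℝ} (ht : 0 ≤ t) :
    ‖NormedSpace.exp (t • F)‖ ≤
      ‖(R : E →L[ℝ] E)‖ * ‖(↑R⁻¹ : E →L[ℝ] E)‖ * Real.exp (-(b / (2 * s)) * t) := by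
  have hconj : t • F = R * (t • (↑R⁻¹ * F * ↑R)) * ↑R⁻¹ := by
    simp only [mul_smul_comm, smul_mul_assoc, ← mul_assoc, Units.mul_inv, one_mul,
      mul_assoc _ (R : E →L[ℝ] E), Units.mul_inv, mul_one]
  -- `NormedSpace.exp_units_conj` needs a `NormedAlgebra ℚ` instance, which is not global here.
  let : NormedAlgebra ℚ (E →L[ℝ] E) := NormedAlgebra.restrictScalars ℚ ℝ _
  rw [hconj, NormedSpace.exp_units_conj]
  calc _ ≤ ‖(R : E →L[ℝ] E)‖ * ‖NormedSpace.exp (t • (↑R⁻¹ * F * ↑R))‖ *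
          ‖(↑R⁻¹ : E →L[ℝ] E)‖ := norm_mul₃_le
    _ ≤ ‖(R : E →L[ℝ] E)‖ * Real.exp (-(b / (2 * s)) * t) * ‖(↑R⁻¹ : E →L[ℝ] E)‖ := by
        gcongr
        exact norm_exp_smul_le_of_inner_self_le _
          (inner_units_conj_le_of_lyapunov R hR hRS hLyap hb hs hB hS) ht
    _ = _ := by ring

end Dissipative

namespace Matrix

variable {n : Type*} [Fintype n]

theorem lyapunov_of_riccati {m : Type*} [Fintype m] {A S B : Matrix n n ℝ}
    {H : Matrix m n ℝ} (hS : Sᵀ = S) (hARE : A * S + S * Aᵀ + B - S * Hᵀ * H * S = 0) :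
    (A - (1/2 : ℝ) • (S * Hᵀ * H)) * S + S * (A - (1/2 : ℝ) • (S * Hᵀ * H))ᵀ = -B := by
  have hB : B = S * Hᵀ * H * S - A * S - S * Aᵀ := by
    rw [← sub_eq_zero, ← hARE]; abel
  rw [hB, transpose_sub, transpose_smul, transpose_mul, transpose_mul, transpose_transpose, hS]
  simp only [sub_mul, mul_sub, Matrix.smul_mul, Matrix.mul_smul, Matrix.mul_assoc]
  module

variable [DecidableEq n]

theorem PosSemidef.inner_toEuclideanCLM_self_nonneg {A : Matrix n n ℝ} (hA : A.PosSemidef)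
    (x : EuclideanSpace ℝ n) : 0 ≤ ⟪toEuclideanCLM (𝕜 := ℝ) A x, x⟫ := by
  rw [real_inner_comm, inner_toEuclideanCLM]
  simpa using hA.dotProduct_mulVec_nonneg x.ofLp

open scoped MatrixOrder in
theorem IsHermitian.posSemidef_sub_smul_one {A : Matrix n n ℝ} (hA : A.IsHermitian) {c : ℝ}
    (hc : ∀ i, c ≤ hA.eigenvalues i) : (A - c • 1).PosSemidef := by
  have : algebraMap ℝ (Matrix n n ℝ) c ≤ A := by
    refine (algebraMap_le_iff_le_spectrum (a := A) hA.isSelfAdjoint).2 ?_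
    rw [hA.spectrum_real_eq_range_eigenvalues]
    rintro _ ⟨i, rfl⟩
    exact hc i
  rwa [Matrix.le_iff, Algebra.algebraMap_eq_smul_one] at this

open scoped MatrixOrder in
theorem IsHermitian.posSemidef_smul_one_sub {A : Matrix n n ℝ} (hA : A.IsHermitian) {c : ℝ}
    (hc : ∀ i, hA.eigenvalues i ≤ c) : (c • 1 - A).PosSemidef := by
  have : A ≤ algebraMap ℝ (Matrix n n ℝ) c := by
    refine (le_algebraMap_iff_spectrum_le (a := A) hA.isSelfAdjoint).2 ?_
    rw [hA.spectrum_real_eq_range_eigenvalues]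
    rintro _ ⟨i, rfl⟩
    exact hc i
  rwa [Matrix.le_iff, Algebra.algebraMap_eq_smul_one] at this

theorem IsHermitian.mul_norm_sq_le_inner_toEuclideanCLM {A : Matrix n n ℝ}
    (hA : A.IsHermitian) {c : ℝ} (hc : ∀ i, c ≤ hA.eigenvalues i) (x : EuclideanSpace ℝ n) :
    c * ‖x‖ ^ 2 ≤ ⟪toEuclideanCLM (𝕜 := ℝ) A x, x⟫ := by
  have := (hA.posSemidef_sub_smul_one hc).inner_toEuclideanCLM_self_nonneg x
  rwa [map_sub, map_smul, map_one, _root_.sub_apply, _root_.smul_apply, one_apply_eq_self,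
    inner_sub_left, real_inner_smul_left, real_inner_self_eq_norm_sq, sub_nonneg] at this

theorem IsHermitian.inner_toEuclideanCLM_le_mul_norm_sq {A : Matrix n n ℝ}
    (hA : A.IsHermitian) {c : ℝ} (hc : ∀ i, hA.eigenvalues i ≤ c) (x : EuclideanSpace ℝ n) :
    ⟪toEuclideanCLM (𝕜 := ℝ) A x, x⟫ ≤ c * ‖x‖ ^ 2 := by
  have := (hA.posSemidef_smul_one_sub hc).inner_toEuclideanCLM_self_nonneg x
  rwa [map_sub, map_smul, map_one, _root_.sub_apply, _root_.smul_apply, one_apply_eq_self,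
    inner_sub_left, real_inner_smul_left, real_inner_self_eq_norm_sq, sub_nonneg] at this

open scoped Matrix.Norms.Operator in
theorem toEuclideanCLM_exp (M : Matrix n n ℝ) :
    toEuclideanCLM (𝕜 := ℝ) (NormedSpace.exp M) = NormedSpace.exp (toEuclideanCLM (𝕜 := ℝ) M) :=
  NormedSpace.map_exp (toEuclideanCLM (𝕜 := ℝ) (n := n)) (LinearMap.continuous_of_finiteDimensional
    (toEuclideanCLM (𝕜 := ℝ) (n := n)).toAlgEquiv.toLinearMap) M

open scoped MatrixOrder in
theorem norm_exp_smul_toEuclideanCLM_le_of_lyapunov [Nonempty n] {F S B : Matrix n n ℝ}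
    (hS : S.PosDef) (hB : B.PosSemidef) (hLyap : F * S + S * Fᵀ = -B) {t : ℝ} (ht : 0 ≤ t) :
    ‖NormedSpace.exp (t • toEuclideanCLM (𝕜 := ℝ) F)‖ ≤
      √(‖toEuclideanCLM (𝕜 := ℝ) S‖ * ‖toEuclideanCLM (𝕜 := ℝ) S⁻¹‖) *
        Real.exp (-((⨅ i, hB.1.eigenvalues i) / (2 * ⨆ i, hS.1.eigenvalues i)) * t) := by
  set φ := toEuclideanCLM (𝕜 := ℝ) (n := n)
  set R := CFC.sqrt S
  have hRR : R * R = S := CFC.sqrt_mul_sqrt_self S hS.posSemidef.nonneg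
  have hRsa : IsSelfAdjoint R := (CFC.sqrt_nonneg S).isSelfAdjoint
  have hRunit : IsUnit R :=
    CFC.isUnit_sqrt_iff_isStrictlyPositive.2 (isStrictlyPositive_iff_posDef.2 hS)
  set U := (hRunit.map φ).unit
  have hU : (U : EuclideanSpace ℝ n →L[ℝ] EuclideanSpace ℝ n) = φ R := rfl
  have hUinv : (↑U⁻¹ : EuclideanSpace ℝ n →L[ℝ] EuclideanSpace ℝ n) = φ R⁻¹ :=
    Units.inv_eq_of_mul_eq_one_right <| by
      rw [hU, ← map_mul, mul_nonsing_inv _ ((isUnit_iff_isUnit_det _).1 hRunit), map_one]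
  have hLyap' : φ F * φ S + φ S * ContinuousLinearMap.adjoint (φ F) = -φ B := by
    rw [← ContinuousLinearMap.star_eq_adjoint, ← map_star, star_eq_conjTranspose,
      conjTranspose_eq_transpose_of_trivial, ← map_mul, ← map_mul, ← map_add, hLyap, map_neg]
  obtain ⟨i₀⟩ := ‹Nonempty n›
  have key := norm_exp_smul_le_of_lyapunov U (hRsa.map φ) (by rw [hU, ← map_mul, hRR]) hLyap'
    (le_ciInf fun i => hB.eigenvalues_nonneg i)
    ((hS.eigenvalues_pos i₀).trans_le (le_ciSup (Finite.bddAbove_range _) i₀))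
    (hB.1.mul_norm_sq_le_inner_toEuclideanCLM fun i => ciInf_le (Finite.bddBelow_range _) i)
    (hS.1.inner_toEuclideanCLM_le_mul_norm_sq fun i => le_ciSup (Finite.bddAbove_range _) i) ht
  have hnorm {M : Matrix n n ℝ} (hM : IsSelfAdjoint M) : ‖φ M‖ = √‖φ (M * M)‖ := by
    rw [map_mul, (hM.map φ).norm_mul_self, Real.sqrt_sq (norm_nonneg _)]
  have hRinv : R⁻¹ * R⁻¹ = S⁻¹ := by rw [← mul_inv_rev, hRR]
  rwa [hU, hUinv, hnorm hRsa, hnorm (M := R⁻¹) (IsHermitian.inv hRsa), hRR, hRinv,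
    ← Real.sqrt_mul (norm_nonneg _)] at key

end Matrix

/-- `‖e^{t(A - ½ Σ∞ Hᵀ H)}‖₂ ≤ √cond(Σ∞) e^{-βt}` for `t ≥ 0`, where
`Σ∞ ≻ 0` solves the ARE with `Σ_B ≻ 0`, `β = λmin(Σ_B)/(2 λmax(Σ∞))`, and
`cond(Σ∞) = ‖Σ∞‖₂ ‖Σ∞⁻¹‖₂`. -/
theorem stmt1 {d m : ℕ} [NeZero d]
    (A : Matrix (Fin d) (Fin d) ℝ) (H : Matrix (Fin m) (Fin d) ℝ)
    (SB Sinf : Matrix (Fin d) (Fin d) ℝ)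
    (hSB : SB.PosDef) (hSinf : Sinf.PosDef)
    (hARE : A * Sinf + Sinf * Aᵀ + SB - Sinf * Hᵀ * H * Sinf = 0) :
    ∀ t : ℝ, 0 ≤ t →
      specNorm (NormedSpace.exp (t • (A - (1/2 : ℝ) • (Sinf * Hᵀ * H)))) ≤
        Real.sqrt (specNorm Sinf * specNorm Sinf⁻¹) *
          Real.exp (-((⨅ i, hSB.1.eigenvalues i) / (2 * ⨆ i, hSinf.1.eigenvalues i)) * t) := by
  intro t ht
  have hSinfT : Sinfᵀ = Sinf := by rw [← conjTranspose_eq_transpose_of_trivial, hSinf.1]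
  have hbound := norm_exp_smul_toEuclideanCLM_le_of_lyapunov hSinf hSB.posSemidef
    (lyapunov_of_riccati hSinfT hARE) ht
  rwa [specNorm, toEuclideanCLM_exp, map_smul]
end

section
/- For continuous paths $Q, U : [0,T] \to S^d_{++}$, define $F(Q)_t$ as the covariance of the linear SDE driven by drift matrix $A - \tfrac{1}{2}Q_t H^\top H$ (as above). Then for $t \le T$, $\sup_{s\le t}\|F(Q)_s - F(U)_s\|_2 \le C \int_0^t \sup_{\tau \le s}\|Q_\tau - U_\tau\|_2\, ds$, where $C = e^{2\kappa t}\|H^\top H\|_2 \sup_{s \le t}\|F(U)_s\|_2$ and $\kappa = \|A\|_2 + \tfrac12 \sup_{s\le t}\|Q_s\|_2\|H^\top H\|_2$. -/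
open Matrix

attribute [local instance] Matrix.frobeniusNormedAddCommGroup Matrix.frobeniusNormedSpace

/-!
With `R = √Ricc(Q)`, the difference `D = F(Q) - F(U)` vanishes at `0` and satisfies
`D' = R D + D Rᵀ + (R - √Ricc(U)) F(U) + F(U) (R - √Ricc(U))ᵀ`, where
`R - √Ricc(U) = -½ (Q - U) HᵀH`. Since the spectral norm is submultiplicative and invariant under
transposition, `‖D'‖ ≤ 2κ ‖D‖ + ‖HᵀH‖ sup ‖F(U)‖ ‖Q - U‖`. Grönwall's inequality with a
time-dependent inhomogeneity then gives `‖D_s‖ ≤ e^{2κs} ‖HᵀH‖ sup ‖F(U)‖ ∫₀ˢ ‖Q - U‖`, and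
`‖Q_τ - U_τ‖` is dominated by its running supremum.
-/

open Set Real

section SpecNorm

variable {d : ℕ}

lemma specNorm_nonneg (M : Matrix (Fin d) (Fin d) ℝ) : 0 ≤ specNorm M := norm_nonneg _

lemma specNorm_add_le (M N : Matrix (Fin d) (Fin d) ℝ) :
    specNorm (M + N) ≤ specNorm M + specNorm N := by
  unfold specNorm; rw [map_add]; exact norm_add_le _ _

lemma specNorm_sub_le (M N : Matrix (Fin d) (Fin d) ℝ) :
    specNorm (M - N) ≤ specNorm M + specNorm N := by
  unfold specNorm; rw [map_sub]; exact norm_sub_le _ _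

lemma specNorm_mul_le (M N : Matrix (Fin d) (Fin d) ℝ) :
    specNorm (M * N) ≤ specNorm M * specNorm N := by
  unfold specNorm; rw [map_mul]; exact norm_mul_le _ _

lemma specNorm_smul (c : ℝ) (M : Matrix (Fin d) (Fin d) ℝ) :
    specNorm (c • M) = |c| * specNorm M := by
  unfold specNorm; rw [map_smul, norm_smul, Real.norm_eq_abs]

lemma specNorm_transpose (M : Matrix (Fin d) (Fin d) ℝ) : specNorm Mᵀ = specNorm M := by
  unfold specNorm
  rw [← conjTranspose_eq_transpose_of_trivial, ← star_eq_conjTranspose, map_star,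
    ContinuousLinearMap.star_eq_adjoint, LinearIsometryEquiv.norm_map]

variable (d) in
noncomputable def toEuclideanCLML :
    Matrix (Fin d) (Fin d) ℝ →L[ℝ] (EuclideanSpace ℝ (Fin d) →L[ℝ] EuclideanSpace ℝ (Fin d)) :=
  LinearMap.toContinuousLinearMap (toEuclideanCLM (n := Fin d) (𝕜 := ℝ)).toAlgEquiv.toLinearMap

lemma continuous_specNorm : Continuous (specNorm : Matrix (Fin d) (Fin d) ℝ → ℝ) :=
  (toEuclideanCLML d).continuous.norm

lemma HasDerivAt.toEuclideanCLM {F : ℝ → Matrix (Fin d) (Fin d) ℝ}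
    {F' : Matrix (Fin d) (Fin d) ℝ} {s : ℝ} (hF : HasDerivAt F F' s) :
    HasDerivAt (fun u => toEuclideanCLM (𝕜 := ℝ) (F u)) (toEuclideanCLM (𝕜 := ℝ) F') s :=
  (toEuclideanCLML d).hasFDerivAt.comp_hasDerivAt s hF

end SpecNorm

section Lyapunov

variable {n k : Type*} [Fintype n] [Fintype k]

/-- The paper's `√Ricc(Q)`. -/
noncomputable def sqrtRicc (A : Matrix n n ℝ) (H : Matrix k n ℝ) (Q : Matrix n n ℝ) :
    Matrix n n ℝ :=
  A - (1/2 : ℝ) • (Q * Hᵀ * H)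

noncomputable def lyapunovField (A : Matrix n n ℝ) (H : Matrix k n ℝ) (SB Q F : Matrix n n ℝ) :
    Matrix n n ℝ :=
  sqrtRicc A H Q * F + F * (sqrtRicc A H Q)ᵀ + SB

lemma lyapunovField_sub_lyapunovField (A : Matrix n n ℝ) (H : Matrix k n ℝ)
    (SB Q U F G : Matrix n n ℝ) :
    lyapunovField A H SB Q F - lyapunovField A H SB U G =
      sqrtRicc A H Q * (F - G) + (F - G) * (sqrtRicc A H Q)ᵀ
        + ((sqrtRicc A H Q - sqrtRicc A H U) * G + G * (sqrtRicc A H Q - sqrtRicc A H U)ᵀ) := by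
  simp only [lyapunovField, transpose_sub, mul_sub, sub_mul]
  abel

lemma sqrtRicc_sub_sqrtRicc (A : Matrix n n ℝ) (H : Matrix k n ℝ) (Q U : Matrix n n ℝ) :
    sqrtRicc A H Q - sqrtRicc A H U = (-(1/2 : ℝ)) • ((Q - U) * (Hᵀ * H)) := by
  simp only [sqrtRicc, Matrix.mul_assoc, sub_mul, smul_sub, neg_smul]
  abel

end Lyapunov

section LyapunovNorm

variable {d k : ℕ} (A : Matrix (Fin d) (Fin d) ℝ) (H : Matrix (Fin k) (Fin d) ℝ)

lemma specNorm_sqrtRicc_le (Q : Matrix (Fin d) (Fin d) ℝ) :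
    specNorm (sqrtRicc A H Q) ≤ specNorm A + specNorm Q / 2 * specNorm (Hᵀ * H) := by
  have hsmul : specNorm ((1/2 : ℝ) • (Q * (Hᵀ * H))) ≤ specNorm Q / 2 * specNorm (Hᵀ * H) := by
    rw [specNorm_smul, abs_of_pos one_half_pos]
    linarith [specNorm_mul_le Q (Hᵀ * H)]
  rw [sqrtRicc, Matrix.mul_assoc]
  linarith [specNorm_sub_le A ((1/2 : ℝ) • (Q * (Hᵀ * H)))]

lemma specNorm_sqrtRicc_sub_sqrtRicc_le (Q U : Matrix (Fin d) (Fin d) ℝ) :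
    specNorm (sqrtRicc A H Q - sqrtRicc A H U) ≤ specNorm (Q - U) * specNorm (Hᵀ * H) / 2 := by
  rw [sqrtRicc_sub_sqrtRicc, specNorm_smul, abs_neg, abs_of_pos one_half_pos]
  linarith [specNorm_mul_le (Q - U) (Hᵀ * H)]

lemma specNorm_lyapunovField_sub_le (SB Q U F G : Matrix (Fin d) (Fin d) ℝ) {q γ : ℝ}
    (hQ : specNorm Q ≤ q) (hG : specNorm G ≤ γ) :
    specNorm (lyapunovField A H SB Q F - lyapunovField A H SB U G) ≤
      2 * (specNorm A + q / 2 * specNorm (Hᵀ * H)) * specNorm (F - G)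
        + specNorm (Hᵀ * H) * γ * specNorm (Q - U) := by
  set R := sqrtRicc A H Q
  set D := sqrtRicc A H Q - sqrtRicc A H U
  have hR : specNorm R ≤ specNorm A + q / 2 * specNorm (Hᵀ * H) :=
    (specNorm_sqrtRicc_le A H Q).trans (by gcongr; exact specNorm_nonneg _)
  have hD := specNorm_sqrtRicc_sub_sqrtRicc_le A H Q U
  rw [lyapunovField_sub_lyapunovField]
  calc _ ≤ specNorm (R * (F - G)) + specNorm ((F - G) * Rᵀ)
          + (specNorm (D * G) + specNorm (G * Dᵀ)) :=
        (specNorm_add_le _ _).trans (add_le_add (specNorm_add_le _ _) (specNorm_add_le _ _))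
    _ ≤ specNorm R * specNorm (F - G) + specNorm (F - G) * specNorm R
          + (specNorm D * specNorm G + specNorm G * specNorm D) := by
        have hFR := specNorm_mul_le (F - G) Rᵀ
        have hGD := specNorm_mul_le G Dᵀ
        rw [specNorm_transpose] at hFR hGD
        gcongr <;> apply specNorm_mul_le
    _ ≤ _ := by
        have hRΔ := mul_le_mul_of_nonneg_right hR (specNorm_nonneg (F - G))
        have hDG := mul_le_mul_of_nonneg_left hD (specNorm_nonneg G)
        have hGγ := mul_le_mul_of_nonneg_right hG
          (mul_nonneg (specNorm_nonneg (Q - U)) (specNorm_nonneg (Hᵀ * H)))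
        linarith

end LyapunovNorm

section Gronwall

variable {E : Type*} [NormedAddCommGroup E] [NormedSpace ℝ E] {f f' : ℝ → E} {g : ℝ → ℝ}
  {K a b : ℝ}

lemma ContinuousOn.hasDerivWithinAt_integral_Icc (hg : ContinuousOn g (Icc a b)) {x : ℝ}
    (hx : x ∈ Icc a b) : HasDerivWithinAt (fun u => ∫ v in a..u, g v) (g x) (Icc a b) x := by
  have := Fact.mk hx
  apply intervalIntegral.integral_hasDerivWithinAt_right
  · exact (hg.mono (Icc_subset_Icc_right hx.2)).intervalIntegrable_of_Icc hx.1
  · exact hg.stronglyMeasurableAtFilter_nhdsWithin measurableSet_Icc x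
  · exact hg.continuousWithinAt hx

lemma norm_le_exp_mul_integral_add_of_norm_deriv_le (hK : 0 ≤ K)
    (hf : ContinuousOn f (Icc a b)) (hf' : ∀ s ∈ Ico a b, HasDerivWithinAt f (f' s) (Ici s) s)
    (hfa : f a = 0) (hg : ContinuousOn g (Icc a b)) (hg0 : ∀ s ∈ Icc a b, 0 ≤ g s)
    (bound : ∀ s ∈ Ico a b, ‖f' s‖ ≤ K * ‖f s‖ + g s) {ε : ℝ} (hε : 0 < ε) :
    ∀ s ∈ Icc a b, ‖f s‖ ≤ exp (K * (s - a)) * ((∫ u in a..s, g u) + ε * (s - a + 1)) := by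
  -- The term `ε * (x - a + 1)` makes the barrier `exp (K * (x - a)) * φ x` a strict supersolution.
  set φ : ℝ → ℝ := fun x => (∫ u in a..x, g u) + ε * (x - a + 1)
  have hφ : ∀ x ∈ Icc a b, HasDerivWithinAt φ (g x + ε) (Icc a b) x := fun x hx =>
    (hg.hasDerivWithinAt_integral_Icc hx).add
      (by simpa using ((hasDerivWithinAt_id x _).sub_const a |>.add_const 1).const_mul ε)
  have hexp : ∀ x, HasDerivAt (fun x => exp (K * (x - a))) (exp (K * (x - a)) * K) x :=
    fun x => by simpa using (((hasDerivAt_id x).sub_const a).const_mul K).exp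
  have hB : ∀ x ∈ Icc a b, HasDerivWithinAt (fun x => exp (K * (x - a)) * φ x)
      (exp (K * (x - a)) * K * φ x + exp (K * (x - a)) * (g x + ε)) (Icc a b) x := fun x hx =>
    (hexp x).hasDerivWithinAt.mul (hφ x hx)
  refine image_norm_le_of_norm_deriv_right_lt_deriv_boundary' hf hf' (by simpa [hfa] using hε.le)
    (fun x hx => (hB x hx).continuousWithinAt)
    (fun x hx => (hB x (Ico_subset_Icc_self hx)).mono_of_mem_nhdsWithin
      (Filter.mem_of_superset (Icc_mem_nhdsGE hx.2) (Icc_subset_Icc_left hx.1))) ?_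
  intro x hx hfx
  have h1 : 1 ≤ exp (K * (x - a)) := one_le_exp (mul_nonneg hK (sub_nonneg.2 hx.1))
  have hgx := hg0 x (Ico_subset_Icc_self hx)
  calc ‖f' x‖ ≤ K * ‖f x‖ + g x := bound x hx
    _ < K * ‖f x‖ + (g x + ε) := by linarith
    _ ≤ exp (K * (x - a)) * K * φ x + exp (K * (x - a)) * (g x + ε) := by
        rw [hfx]; nlinarith

theorem norm_le_exp_mul_integral_of_norm_deriv_le (hK : 0 ≤ K)
    (hf : ContinuousOn f (Icc a b)) (hf' : ∀ s ∈ Ico a b, HasDerivWithinAt f (f' s) (Ici s) s)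
    (hfa : f a = 0) (hg : ContinuousOn g (Icc a b)) (hg0 : ∀ s ∈ Icc a b, 0 ≤ g s)
    (bound : ∀ s ∈ Ico a b, ‖f' s‖ ≤ K * ‖f s‖ + g s) :
    ∀ s ∈ Icc a b, ‖f s‖ ≤ exp (K * (s - a)) * ∫ u in a..s, g u := by
  intro s hs
  have hlim : Filter.Tendsto (fun ε => exp (K * (s - a)) * ((∫ u in a..s, g u) + ε * (s - a + 1)))
      (nhdsWithin 0 (Ioi 0)) (nhds (exp (K * (s - a)) * ∫ u in a..s, g u)) := by
    have hcont : Continuous fun ε : ℝ =>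
        exp (K * (s - a)) * ((∫ u in a..s, g u) + ε * (s - a + 1)) := by fun_prop
    simpa using (hcont.tendsto 0).mono_left nhdsWithin_le_nhds
  exact ge_of_tendsto hlim <| eventually_nhdsWithin_of_forall fun ε hε =>
    norm_le_exp_mul_integral_add_of_norm_deriv_le hK hf hf' hfa hg hg0 bound hε s hs

end Gronwall

section RunningSup

variable {g : ℝ → ℝ} {a b : ℝ}

lemma ContinuousOn.monotoneOn_sSup_image_Icc (hg : ContinuousOn g (Icc a b)) :
    MonotoneOn (fun s => sSup (g '' Icc a s)) (Icc a b) := fun _ hx _ hy hxy =>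
  csSup_le_csSup (isCompact_Icc.bddAbove_image (hg.mono (Icc_subset_Icc_right hy.2)))
    ((nonempty_Icc.2 hx.1).image g) (image_mono (Icc_subset_Icc_right hxy))

lemma ContinuousOn.integral_le_integral_sSup_image_Icc (hg : ContinuousOn g (Icc a b))
    (hg0 : ∀ s ∈ Icc a b, 0 ≤ g s) {s : ℝ} (hs : s ∈ Icc a b) :
    ∫ u in a..s, g u ≤ ∫ u in a..b, sSup (g '' Icc a u) := by
  have hab : a ≤ b := hs.1.trans hs.2
  have hint : IntervalIntegrable g MeasureTheory.volume a b := hg.intervalIntegrable_of_Icc hab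
  calc ∫ u in a..s, g u ≤ ∫ u in a..b, g u :=
        intervalIntegral.integral_mono_interval le_rfl hs.1 hs.2
          (MeasureTheory.ae_restrict_of_forall_mem measurableSet_Ioc fun u hu =>
            hg0 u (Ioc_subset_Icc_self hu)) hint
    _ ≤ ∫ u in a..b, sSup (g '' Icc a u) :=
        intervalIntegral.integral_mono_on hab hint
          (MonotoneOn.intervalIntegrable <| by
            simpa [uIcc_of_le hab] using hg.monotoneOn_sSup_image_Icc)
          fun u hu => (hg.mono (Icc_subset_Icc_right hu.2)).le_sSup_image_Icc ⟨hu.1, le_rfl⟩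

variable {E : Type*} [NormedAddCommGroup E] [NormedSpace ℝ E] {f f' : ℝ → E} {K c : ℝ}

theorem sSup_norm_le_exp_mul_integral_sSup_of_norm_deriv_le (hab : a ≤ b) (hK : 0 ≤ K)
    (hc : 0 ≤ c) (hf : ContinuousOn f (Icc a b))
    (hf' : ∀ s ∈ Ico a b, HasDerivWithinAt f (f' s) (Ici s) s) (hfa : f a = 0)
    (hg : ContinuousOn g (Icc a b)) (hg0 : ∀ s ∈ Icc a b, 0 ≤ g s)
    (bound : ∀ s ∈ Ico a b, ‖f' s‖ ≤ K * ‖f s‖ + c * g s) :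
    sSup ((fun s => ‖f s‖) '' Icc a b) ≤
      exp (K * (b - a)) * c * ∫ u in a..b, sSup (g '' Icc a u) := by
  have hgronwall := norm_le_exp_mul_integral_of_norm_deriv_le hK hf hf' hfa
    (by fun_prop : ContinuousOn (fun s => c * g s) (Icc a b))
    (fun s hs => mul_nonneg hc (hg0 s hs)) bound
  refine csSup_le ((nonempty_Icc.2 hab).image _) ?_
  rintro _ ⟨s, hs, rfl⟩
  calc ‖f s‖ ≤ exp (K * (s - a)) * (c * ∫ u in a..s, g u) := by
        simpa only [intervalIntegral.integral_const_mul] using hgronwall s hs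
    _ ≤ exp (K * (b - a)) * (c * ∫ u in a..b, sSup (g '' Icc a u)) := by
        refine mul_le_mul (exp_le_exp.2 (by gcongr; exact hs.2))
          (mul_le_mul_of_nonneg_left (hg.integral_le_integral_sSup_image_Icc hg0 hs) hc) ?_
          (exp_pos _).le
        exact mul_nonneg hc <|
          intervalIntegral.integral_nonneg hs.1 fun u hu => hg0 u ⟨hu.1, hu.2.trans hs.2⟩
    _ = _ := by ring

end RunningSup

theorem sSup_specNorm_le_exp_mul_integral_sSup_of_hasDerivAt {d : ℕ}
    {D D' : ℝ → Matrix (Fin d) (Fin d) ℝ} {g : ℝ → ℝ} {K c t : ℝ} (ht : 0 ≤ t) (hK : 0 ≤ K)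
    (hc : 0 ≤ c) (hD : ∀ s ∈ Icc 0 t, HasDerivAt D (D' s) s) (hD0 : D 0 = 0)
    (hg : ContinuousOn g (Icc 0 t)) (hg0 : ∀ s ∈ Icc 0 t, 0 ≤ g s)
    (bound : ∀ s ∈ Icc 0 t, specNorm (D' s) ≤ K * specNorm (D s) + c * g s) :
    sSup ((fun s => specNorm (D s)) '' Icc 0 t) ≤
      exp (K * t) * c * ∫ u in 0..t, sSup (g '' Icc 0 u) := by
  have hD' : ∀ s ∈ Icc 0 t, HasDerivAt (fun u => toEuclideanCLM (𝕜 := ℝ) (D u))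
      (toEuclideanCLM (𝕜 := ℝ) (D' s)) s := fun s hs => (hD s hs).toEuclideanCLM
  have := sSup_norm_le_exp_mul_integral_sSup_of_norm_deriv_le ht hK hc
    (fun s hs => (hD' s hs).continuousAt.continuousWithinAt)
    (fun s hs => (hD' s (Ico_subset_Icc_self hs)).hasDerivWithinAt) (by simp [hD0]) hg hg0
    (fun s hs => bound s (Ico_subset_Icc_self hs))
  rwa [sub_zero] at this

theorem stmt8_general {d m : ℕ} (T : ℝ)
    (A : Matrix (Fin d) (Fin d) ℝ) (H : Matrix (Fin m) (Fin d) ℝ)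
    (SB S0 : Matrix (Fin d) (Fin d) ℝ)
    (Q U : ℝ → Matrix (Fin d) (Fin d) ℝ)
    (hQcont : ContinuousOn Q (Set.Icc 0 T)) (hUcont : ContinuousOn U (Set.Icc 0 T))
    (FQ FU : ℝ → Matrix (Fin d) (Fin d) ℝ)
    (hFQ0 : FQ 0 = S0) (hFU0 : FU 0 = S0)
    (hFQ : ∀ t ∈ Set.Icc (0 : ℝ) T, HasDerivAt FQ
      ((A - (1/2 : ℝ) • (Q t * Hᵀ * H)) * FQ t
        + FQ t * (A - (1/2 : ℝ) • (Q t * Hᵀ * H))ᵀ + SB) t)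
    (hFU : ∀ t ∈ Set.Icc (0 : ℝ) T, HasDerivAt FU
      ((A - (1/2 : ℝ) • (U t * Hᵀ * H)) * FU t
        + FU t * (A - (1/2 : ℝ) • (U t * Hᵀ * H))ᵀ + SB) t) :
    ∀ t ∈ Set.Icc (0 : ℝ) T,
      sSup ((fun s => specNorm (FQ s - FU s)) '' Set.Icc 0 t) ≤
        (Real.exp (2 * (specNorm A +
              (sSup ((fun s => specNorm (Q s)) '' Set.Icc 0 t)) / 2 * specNorm (Hᵀ * H)) * t)
          * specNorm (Hᵀ * H) * sSup ((fun s => specNorm (FU s)) '' Set.Icc 0 t)) *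
        ∫ s in (0 : ℝ)..t, sSup ((fun τ => specNorm (Q τ - U τ)) '' Set.Icc 0 s) := by
  intro t ⟨ht0, htT⟩
  have hsub : Icc 0 t ⊆ Icc 0 T := Icc_subset_Icc_right htT
  have hQ : ContinuousOn (fun s => specNorm (Q s)) (Icc 0 t) :=
    continuous_specNorm.comp_continuousOn (hQcont.mono hsub)
  have hFU' : ContinuousOn (fun s => specNorm (FU s)) (Icc 0 t) :=
    continuous_specNorm.comp_continuousOn fun s hs =>
      (hFU s (hsub hs)).continuousAt.continuousWithinAt
  have hQsup := (specNorm_nonneg _).trans (hQ.le_sSup_image_Icc ⟨le_rfl, ht0⟩)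
  have hFUsup := (specNorm_nonneg _).trans (hFU'.le_sSup_image_Icc ⟨le_rfl, ht0⟩)
  have hA := specNorm_nonneg A
  have hHH := specNorm_nonneg (Hᵀ * H)
  rw [mul_assoc (exp _)]
  exact sSup_specNorm_le_exp_mul_integral_sSup_of_hasDerivAt ht0 (by positivity) (by positivity)
    (fun s hs => (hFQ s (hsub hs)).sub (hFU s (hsub hs))) (by simp [hFQ0, hFU0])
    (continuous_specNorm.comp_continuousOn ((hQcont.sub hUcont).mono hsub))
    (fun _ _ => specNorm_nonneg _)
    (fun s hs => specNorm_lyapunovField_sub_le A H SB (Q s) (U s) (FQ s) (FU s)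
      (hQ.le_sSup_image_Icc hs) (hFU'.le_sSup_image_Icc hs))

/-- Lipschitz estimate for the covariance map `Q ↦ F(Q)`.
The covariances `F(Q), F(U)` solve the Lyapunov ODEs with drifts `√Ricc(Qₜ) = A - ½QₜHᵀH`,
resp. `√Ricc(Uₜ)`, and their difference solves
`d/dt (F(Q)-F(U)) = √Ricc(Q)(F(Q)-F(U)) + (F(Q)-F(U))√Ricc(Q)ᵀ + ½(Q-U)HᵀH F(U) + ½F(U)HᵀH(Q-U)`.
Then `sup_{s≤t}‖F(Q)_s - F(U)_s‖₂ ≤ C ∫₀ᵗ sup_{τ≤s}‖Q_τ-U_τ‖₂ ds` with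
`C = e^{2κt}‖HᵀH‖₂ sup_{s≤t}‖F(U)_s‖₂`, `κ = ‖A‖₂ + ½ sup_{s≤t}‖Q_s‖₂‖HᵀH‖₂`. -/
theorem stmt8 {d m : ℕ} (T : ℝ) (hT : 0 < T)
    (A : Matrix (Fin d) (Fin d) ℝ) (H : Matrix (Fin m) (Fin d) ℝ)
    (SB S0 : Matrix (Fin d) (Fin d) ℝ) (hSB : SB.PosSemidef) (hS0 : S0.PosDef)
    (Q U : ℝ → Matrix (Fin d) (Fin d) ℝ)
    (hQcont : ContinuousOn Q (Set.Icc 0 T)) (hUcont : ContinuousOn U (Set.Icc 0 T))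
    (hQpos : ∀ t ∈ Set.Icc (0 : ℝ) T, (Q t).PosDef)
    (hUpos : ∀ t ∈ Set.Icc (0 : ℝ) T, (U t).PosDef)
    (FQ FU : ℝ → Matrix (Fin d) (Fin d) ℝ)
    (hFQ0 : FQ 0 = S0) (hFU0 : FU 0 = S0)
    (hFQ : ∀ t ∈ Set.Icc (0 : ℝ) T, HasDerivAt FQ
      ((A - (1/2 : ℝ) • (Q t * Hᵀ * H)) * FQ t
        + FQ t * (A - (1/2 : ℝ) • (Q t * Hᵀ * H))ᵀ + SB) t)
    (hFU : ∀ t ∈ Set.Icc (0 : ℝ) T, HasDerivAt FU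
      ((A - (1/2 : ℝ) • (U t * Hᵀ * H)) * FU t
        + FU t * (A - (1/2 : ℝ) • (U t * Hᵀ * H))ᵀ + SB) t) :
    ∀ t ∈ Set.Icc (0 : ℝ) T,
      sSup ((fun s => specNorm (FQ s - FU s)) '' Set.Icc 0 t) ≤
        (Real.exp (2 * (specNorm A +
              (sSup ((fun s => specNorm (Q s)) '' Set.Icc 0 t)) / 2 * specNorm (Hᵀ * H)) * t)
          * specNorm (Hᵀ * H) * sSup ((fun s => specNorm (FU s)) '' Set.Icc 0 t)) *
        ∫ s in (0 : ℝ)..t, sSup ((fun τ => specNorm (Q τ - U τ)) '' Set.Icc 0 s) :=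
  stmt8_general T A H SB S0 Q U hQcont hUcont FQ FU hFQ0 hFU0 hFQ hFU
end
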